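/- Let F ⊆ V×V be a loop-free arc set with |F| ≤ k such that (G△F, σ) is a BMG, and let s_1, s_2 ∈ S be vertices such that G△F contains arcs (x_1,s_1) and (x_2,s_2) for some x_1 ∈ X_i and x_2 ∈ X_j with i ≠ j. Then neither (s_1,s_2) nor (s_2,s_1) is an arc of G△F. -/

import Mathlib

/-- A rooted phylogenetic tree with leaf set `V`, encoded by its hierarchy of clusters
(the cluster of a vertex is the set of leaves below it; inner vertices of a phylogenetic
tree have at least two children, so vertices correspond bijectively to clusters). -/
structure PhyloTree (V : Type*) where
  clusters : Set (Set V)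
  nonempty_of_mem : ∀ A ∈ clusters, A.Nonempty
  univ_mem : Set.univ ∈ clusters
  singleton_mem : ∀ v : V, {v} ∈ clusters
  nested : ∀ A ∈ clusters, ∀ B ∈ clusters, A ⊆ B ∨ B ⊆ A ∨ Disjoint A B

namespace PhyloTree

variable {V : Type*}

/-- The cluster of the last common ancestor of `x` and `y`: the smallest cluster
containing both (the clusters containing `x` and `y` form a chain, so their
intersection is the smallest one). -/
def lca (T : PhyloTree V) (x y : V) : Set V :=
  ⋂₀ {A | A ∈ T.clusters ∧ x ∈ A ∧ y ∈ A}

/-- The rooted triple `xy|z` (on three pairwise distinct leaves) is displayed by `T`: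
`lca(x,y) ≺ lca(x,z) = lca(y,z)`. -/
def Displays (T : PhyloTree V) (x y z : V) : Prop :=
  x ≠ y ∧ x ≠ z ∧ y ≠ z ∧ T.lca x y ⊂ T.lca x z ∧ T.lca x z = T.lca y z

/-- `T` displays every triple of `R`; a triple `(x, y, z)` encodes `xy|z`. -/
def DisplaysSet (T : PhyloTree V) (R : Set (V × V × V)) : Prop :=
  ∀ t ∈ R, T.Displays t.1 t.2.1 t.2.2

/-- `r(T)`, the set of triples displayed by `T`. -/
def triples (T : PhyloTree V) : Set (V × V × V) :=
  {t | T.Displays t.1 t.2.1 t.2.2}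

/-- `T` is binary: every inner vertex (cluster with at least two leaves) has exactly
two children, i.e. splits into two disjoint proper subclusters. -/
def IsBinary (T : PhyloTree V) : Prop :=
  ∀ A ∈ T.clusters, 1 < A.ncard →
    ∃ B ∈ T.clusters, ∃ D ∈ T.clusters,
      Disjoint B D ∧ B ∪ D = A ∧ B ⊂ A ∧ D ⊂ A

/-- `T'` is a refinement of `T`: they have the same leaf set and `T` is obtained from
`T'` by contracting inner edges, i.e. every cluster of `T` is a cluster of `T'`. -/
def Refines (T' T : PhyloTree V) : Prop :=
  T.clusters ⊆ T'.clusters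

end PhyloTree

section BMG

variable {V C : Type*}

/-- `y` is a best match of `x` in the leaf-colored tree `(T,σ)`. -/
def bestMatch (T : PhyloTree V) (σ : V → C) (x y : V) : Prop :=
  σ x ≠ σ y ∧ ∀ y' : V, σ y' = σ y → T.lca x y ⊆ T.lca x y'

/-- The leaf-colored tree `(T,σ)` explains the vertex-colored digraph `(E,σ)`,
i.e. `(E,σ)` is the best match graph of `(T,σ)`. -/
def Explains (T : PhyloTree V) (σ : V → C) (E : V → V → Prop) : Prop :=
  ∀ x y, E x y ↔ bestMatch T σ x y

/-- `(E,σ)` is a best match graph. -/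
def IsBMG (E : V → V → Prop) (σ : V → C) : Prop :=
  ∃ T : PhyloTree V, Explains T σ E

/-- `(E,σ)` is binary-explainable. -/
def BinaryExplainable (E : V → V → Prop) (σ : V → C) : Prop :=
  ∃ T : PhyloTree V, T.IsBinary ∧ Explains T σ E

/-- The informative triples `R(G,σ)`: `(a,b,b')` encodes `ab|b'`. -/
def informativeTriples (E : V → V → Prop) (σ : V → C) : Set (V × V × V) :=
  {t | σ t.1 ≠ σ t.2.1 ∧ σ t.2.1 = σ t.2.2 ∧ E t.1 t.2.1 ∧ ¬ E t.1 t.2.2}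

/-- The forbidden triples `F(G,σ)`: `(a,b,b')` encodes `ab|b'`. -/
def forbiddenTriples (E : V → V → Prop) (σ : V → C) : Set (V × V × V) :=
  {t | σ t.1 ≠ σ t.2.1 ∧ σ t.2.1 = σ t.2.2 ∧ t.2.1 ≠ t.2.2 ∧ E t.1 t.2.1 ∧ E t.1 t.2.2}

/-- The extended triple set `R^bin(G,σ) = R(G,σ) ∪ {bb'|a : ab|b' ∈ F(G,σ)}`. -/
def Rbin (E : V → V → Prop) (σ : V → C) : Set (V × V × V) :=
  informativeTriples E σ ∪ {t | (t.2.2, t.1, t.2.1) ∈ forbiddenTriples E σ}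

/-- Properly colored: arcs only between vertices of distinct colors. -/
def ProperlyColored (E : V → V → Prop) (σ : V → C) : Prop :=
  ∀ x y, E x y → σ x ≠ σ y

/-- sf-colored: properly colored and every vertex has, for each color (of the graph)
different from its own, at least one out-neighbor of that color. -/
def SfColored (E : V → V → Prop) (σ : V → C) : Prop :=
  ProperlyColored E σ ∧ ∀ x y : V, σ y ≠ σ x → ∃ z, E x z ∧ σ z = σ y

/-- A triple set is consistent if some tree displays all of its triples. -/
def Consistent (R : Set (V × V × V)) : Prop :=
  ∃ T : PhyloTree V, T.DisplaysSet R

/-- The closure `cl(R)`: all triples displayed by every tree displaying `R`. -/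
def tripleClosure (R : Set (V × V × V)) : Set (V × V × V) :=
  {t | ∀ T : PhyloTree V, T.DisplaysSet R → T.Displays t.1 t.2.1 t.2.2}

/-- `(T,σ)` is a least resolved tree for `(E,σ)`: it explains `(E,σ)` and no tree
obtained from it by contracting an edge (i.e. by removing a non-root inner cluster)
explains `(E,σ)`. -/
def IsLRT (T : PhyloTree V) (σ : V → C) (E : V → V → Prop) : Prop :=
  Explains T σ E ∧
    ∀ A ∈ T.clusters, A ≠ Set.univ → 1 < A.ncard →
      ∀ T' : PhyloTree V, T'.clusters = T.clusters \ {A} → ¬ Explains T' σ E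

end BMG

section Aho

variable {V : Type*}

/-- Adjacency in the Aho graph `[R,L]`: `x` and `y` are joined whenever `xy|z ∈ R`
for some `z ∈ L` (only triples with all leaves in `L` are taken into account). -/
def ahoAdj (R : Set (V × V × V)) (L : Set V) (x y : V) : Prop :=
  x ∈ L ∧ y ∈ L ∧ ∃ z ∈ L, (x, y, z) ∈ R ∨ (y, x, z) ∈ R

/-- The vertex set of the connected component of `x` in the Aho graph `[R,L]`. -/
def ahoComponent (R : Set (V × V × V)) (L : Set V) (x : V) : Set V :=
  {y | Relation.ReflTransGen (ahoAdj R L) x y}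

/-- The clusters of the Aho tree `Aho(R, V)`: the full leaf set, and recursively the
connected components of the Aho graphs. -/
inductive IsAhoCluster (R : Set (V × V × V)) : Set V → Prop
  | univ : IsAhoCluster R Set.univ
  | component {L : Set V} {x : V} :
      IsAhoCluster R L → x ∈ L → IsAhoCluster R (ahoComponent R L x)

/-- `T` is the Aho tree (`BUILD` tree) of the triple set `R` on the full leaf set. -/
def IsAhoTree (R : Set (V × V × V)) (T : PhyloTree V) : Prop :=
  T.clusters = {A | IsAhoCluster R A}

/-- The union of the leaf sets of the triples in `R`. -/
def tripleLeaves (R : Set (V × V × V)) : Set V :=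
  {v | ∃ t ∈ R, v = t.1 ∨ v = t.2.1 ∨ v = t.2.2}

end Aho

/-! ### The reduction from Exact 3-Cover (X3C)

Given an X3C instance, a set `𝔖` with `|𝔖| = 3t` and a collection `𝒞 = {C_1,…,C_m}`
of 3-element subsets of `𝔖`, set `r = 18t²`, `k = 6r(m−t) + r − 18t` and `q = 3k`.
The constructed 2-colored digraph `(G,σ)` (colors: black = `true`, white = `false`)
has vertex set `S ⊍ (X_1 ⊍ ⋯ ⊍ X_m) ⊍ (Y_1 ⊍ ⋯ ⊍ Y_m)`, where `S` contains a black and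
a white copy of each `s ∈ 𝔖`, each `X_i` has `r` black and `r` white vertices and each
`Y_i` has `q` black and `q` white vertices. -/

/-- The vertex set of the reduction graph. -/
abbrev Vred (SS : Type*) (m r q : ℕ) : Type _ :=
  (SS × Bool) ⊕ ((Fin m × Fin r × Bool) ⊕ (Fin m × Fin q × Bool))

/-- The coloring of the reduction graph (black = `true`, white = `false`). -/
def sigmaRed {SS : Type*} {m r q : ℕ} : Vred SS m r q → Bool
  | Sum.inl (_, c) => c
  | Sum.inr (Sum.inl (_, _, c)) => c
  | Sum.inr (Sum.inr (_, _, c)) => c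

/-- The set `S` of vertices of the reduction graph. -/
def Sset {SS : Type*} {m r q : ℕ} : Set (Vred SS m r q) :=
  Set.range Sum.inl

/-- The set `X_i` of vertices of the reduction graph. -/
def Xset {SS : Type*} {m r q : ℕ} (i : Fin m) : Set (Vred SS m r q) :=
  {v | ∃ p c, v = Sum.inr (Sum.inl (i, p, c))}

/-- The set `Y_i` of vertices of the reduction graph. -/
def Yset {SS : Type*} {m r q : ℕ} (i : Fin m) : Set (Vred SS m r q) :=
  {v | ∃ p c, v = Sum.inr (Sum.inr (i, p, c))}

/-- The arc set of the reduction graph: both arcs between every black and every white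
vertex of `S`; all arcs from black to white vertices within each `X_i`; both arcs
between every black and every white vertex within each `Y_i`; all arcs `(x,y)` with
`x ∈ X_i`, `y ∈ Y_i` of distinct colors; and for each `i` and each `s ∈ C_i` the arcs
`(x, s_b)` for white `x ∈ X_i` and `(x, s_w)` for black `x ∈ X_i`. -/
def Ered {SS : Type*} {m r q : ℕ} (𝒞 : Fin m → Finset SS) :
    Set (Vred SS m r q × Vred SS m r q) :=
  {p | match p with
    | (Sum.inl (_, c), Sum.inl (_, c')) => c ≠ c'
    | (Sum.inr (Sum.inl (i, _, c)), Sum.inr (Sum.inl (i', _, c'))) =>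
        i = i' ∧ c = true ∧ c' = false
    | (Sum.inr (Sum.inr (i, _, c)), Sum.inr (Sum.inr (i', _, c'))) => i = i' ∧ c ≠ c'
    | (Sum.inr (Sum.inl (i, _, c)), Sum.inr (Sum.inr (j, _, c'))) => i = j ∧ c ≠ c'
    | (Sum.inr (Sum.inl (i, _, c)), Sum.inl (s, c')) => s ∈ 𝒞 i ∧ c ≠ c'
    | _ => False}

/-- `r = 18t²`. -/
def rr (t : ℕ) : ℕ := 18 * t ^ 2

/-- `k = 6r(m−t) + r − 18t`. -/
def kk (t m : ℕ) : ℕ := 6 * rr t * (m - t) + rr t - 18 * t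

/-- `q = 3·(6r(m−t) + r − 18t)`. -/
def qq (t m : ℕ) : ℕ := 3 * kk t m

/-- The X3C instance `(𝔖, 𝒞)` has an exact 3-cover: a subcollection `𝒞' ⊆ 𝒞` with
`|𝒞'| = t` whose union is `𝔖`. -/
def HasExact3Cover {SS : Type*} {m : ℕ} (t : ℕ) (𝒞 : Fin m → Finset SS) : Prop :=
  ∃ I : Finset (Fin m), I.card = t ∧ ∀ s : SS, ∃ i ∈ I, s ∈ 𝒞 i


/-!
Suppose `(s₁, s₂)` is an arc of `G△F`, so `s₁, s₂` have different colors and `x₁` has the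
color of `s₂`. Then `s₂` lies below `lca(x₁, s₁)` as well as below `lca(x₂, s₂)`, so these two
clusters are nested, say `lca(x₁, s₁) ⊆ lca(x₂, s₂)`. Since `|F| ≤ k < q`, the set `Y_i` contains
vertices of either color that are not the head of any arc of `F`: a vertex `y` of the color
of `s₁`, which is then a best match of `x₁`, and a vertex `w` of the color of `x₁`, which is
then a best match of `y`. This places `w` in `lca(x₁, y) ⊆ lca(x₁, s₁) ⊆ lca(x₂, s₂)`, so `w`
is a best match of `x₂ ∈ X_j`; but `(x₂, w)` is not an arc of `G` and not an arc of `F`.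
-/

namespace PhyloTree

variable {V : Type*} (T : PhyloTree V)

lemma mem_lca_left (x y : V) : x ∈ T.lca x y :=
  Set.mem_sInter.mpr fun _ hA => hA.2.1

lemma mem_lca_right (x y : V) : y ∈ T.lca x y :=
  Set.mem_sInter.mpr fun _ hA => hA.2.2

lemma lca_subset {x y : V} {A : Set V} (hA : A ∈ T.clusters) (hx : x ∈ A) (hy : y ∈ A) :
    T.lca x y ⊆ A :=
  Set.sInter_subset_of_mem ⟨hA, hx, hy⟩

lemma lca_comm (x y : V) : T.lca x y = T.lca y x := by
  simp only [lca, and_comm (a := x ∈ _)]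

lemma lca_mem_clusters [Finite V] (x y : V) : T.lca x y ∈ T.clusters := by
  set S : Set (Set V) := {A | A ∈ T.clusters ∧ x ∈ A ∧ y ∈ A}
  obtain ⟨M, hMS, hMmin⟩ := (Set.toFinite S).exists_minimal ⟨_, T.univ_mem, trivial, trivial⟩
  have hM_subset : ∀ A ∈ S, M ⊆ A := by
    intro A hA
    rcases T.nested M hMS.1 A hA.1 with h | h | h
    · exact h
    · exact hMmin hA h
    · exact absurd h (Set.not_disjoint_iff.mpr ⟨x, hMS.2.1, hA.2.1⟩)
  have hlca : T.lca x y = M :=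
    (Set.sInter_subset_of_mem hMS).antisymm (Set.subset_sInter hM_subset)
  exact hlca ▸ hMS.1

lemma lca_subset_or_subset_of_mem [Finite V] {a b c d z : V} (h₁ : z ∈ T.lca a b)
    (h₂ : z ∈ T.lca c d) : T.lca a b ⊆ T.lca c d ∨ T.lca c d ⊆ T.lca a b := by
  rcases T.nested _ (T.lca_mem_clusters a b) _ (T.lca_mem_clusters c d) with h | h | h
  · exact Or.inl h
  · exact Or.inr h
  · exact absurd h (Set.not_disjoint_iff.mpr ⟨z, h₁, h₂⟩)

end PhyloTree

namespace bestMatch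

variable {V C : Type*} {T : PhyloTree V} {σ : V → C} {x y z : V}

lemma mem_lca (h : bestMatch T σ x y) (hz : σ z = σ y) : y ∈ T.lca x z :=
  h.2 z hz (T.mem_lca_right x y)

lemma of_mem_lca [Finite V] (h : bestMatch T σ x y) (hz : σ z = σ y) (hzy : z ∈ T.lca x y) :
    bestMatch T σ x z := by
  refine ⟨hz ▸ h.1, fun z' hz' => ?_⟩
  exact (T.lca_subset (T.lca_mem_clusters x y) (T.mem_lca_left x y) hzy).trans
    (h.2 z' (hz'.trans hz))

end bestMatch

lemma exists_forall_notMem_of_ncard_lt {α β ι : Type*} {F : Set (α × β)} (hF : F.Finite)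
    {w : ι → β} (hw : w.Injective) (hlt : F.ncard < Nat.card ι) : ∃ p, ∀ a, (a, w p) ∉ F := by
  by_contra! h
  choose a ha using h
  have hle := Set.ncard_le_ncard_of_injOn (s := Set.univ) (fun p => (a p, w p))
    (fun p _ => ha p) (fun p _ p' _ hpp' => hw (Prod.ext_iff.mp hpp').2) hF
  rw [Set.ncard_univ] at hle
  omega

lemma one_le_kk {t m : ℕ} (ht : 1 ≤ t) (hm : 2 ≤ m) : 1 ≤ kk t m := by
  unfold kk rr
  rcases le_or_gt m t with h | h
  · have : 18 * t + 1 ≤ 18 * t ^ 2 := by nlinarith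
    omega
  · have : 18 * t + 1 ≤ 6 * (18 * t ^ 2) * (m - t) + 18 * t ^ 2 := by
      nlinarith [Nat.sub_pos_of_lt h]
    omega

section Reduction

variable {SS : Type*} {m r q : ℕ} {𝒞 : Fin m → Finset SS}

lemma mem_Ered_of_mem_Xset_of_mem_Yset {i : Fin m} {x y : Vred SS m r q} (hx : x ∈ Xset i)
    (hy : y ∈ Yset i) (hxy : sigmaRed x ≠ sigmaRed y) : (x, y) ∈ Ered 𝒞 := by
  obtain ⟨p, c, rfl⟩ := hx
  obtain ⟨p', c', rfl⟩ := hy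
  exact ⟨rfl, hxy⟩

lemma notMem_Ered_of_mem_Xset_of_mem_Yset {i j : Fin m} (hij : i ≠ j) {x y : Vred SS m r q}
    (hx : x ∈ Xset j) (hy : y ∈ Yset i) : (x, y) ∉ Ered 𝒞 := by
  obtain ⟨p, c, rfl⟩ := hx
  obtain ⟨p', c', rfl⟩ := hy
  exact fun h => hij h.1.symm

lemma mem_Ered_of_mem_Yset {i : Fin m} {y w : Vred SS m r q} (hy : y ∈ Yset i)
    (hw : w ∈ Yset i) (hyw : sigmaRed y ≠ sigmaRed w) : (y, w) ∈ Ered 𝒞 := by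
  obtain ⟨p, c, rfl⟩ := hy
  obtain ⟨p', c', rfl⟩ := hw
  exact ⟨rfl, hyw⟩

variable [Fintype SS] {F : Set (Vred SS m r q × Vred SS m r q)}

lemma exists_mem_Yset_forall_notMem (hFq : F.ncard < q) (i : Fin m) (b : Bool) :
    ∃ y ∈ Yset i, sigmaRed y = b ∧ ∀ a, (a, y) ∉ F := by
  obtain ⟨p, hp⟩ := exists_forall_notMem_of_ncard_lt (Set.toFinite F)
    (w := fun p : Fin q => (Sum.inr (Sum.inr (i, p, b)) : Vred SS m r q))
    (fun p p' h => by simpa using h) (by simpa using hFq)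
  exact ⟨_, ⟨p, b, rfl⟩, rfl, hp⟩

variable {T : PhyloTree (Vred SS m r q)}
  (hT : Explains T sigmaRed (fun u v => (u, v) ∈ symmDiff (Ered 𝒞) F))
include hT

lemma false_of_lca_subset_lca (hFq : F.ncard < q) {i j : Fin m} (hij : i ≠ j)
    {x₁ x₂ s₁ s₂ : Vred SS m r q} (hx₁ : x₁ ∈ Xset i) (hx₂ : x₂ ∈ Xset j)
    (hx₁s₂ : sigmaRed x₁ = sigmaRed s₂) (hs : sigmaRed s₁ ≠ sigmaRed s₂)
    (h₁ : bestMatch T sigmaRed x₁ s₁) (h₂ : bestMatch T sigmaRed x₂ s₂)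
    (hsub : T.lca x₁ s₁ ⊆ T.lca x₂ s₂) : False := by
  have bestMatch_of_notMem {u v} (huv : (u, v) ∈ Ered 𝒞) (hv : ∀ a, (a, v) ∉ F) :
      bestMatch T sigmaRed u v :=
    (hT u v).mp (Set.mem_symmDiff.mpr (Or.inl ⟨huv, hv u⟩))
  obtain ⟨y, hyY, hyσ, hyF⟩ := exists_mem_Yset_forall_notMem hFq i (sigmaRed s₁)
  obtain ⟨w, hwY, hwσ, hwF⟩ := exists_mem_Yset_forall_notMem hFq i (sigmaRed x₁)
  have hy : bestMatch T sigmaRed x₁ y :=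
    bestMatch_of_notMem (mem_Ered_of_mem_Xset_of_mem_Yset hx₁ hyY (hyσ ▸ h₁.1)) hyF
  have hw : bestMatch T sigmaRed y w :=
    bestMatch_of_notMem (mem_Ered_of_mem_Yset hyY hwY (by rw [hyσ, hwσ, hx₁s₂]; exact hs)) hwF
  have hw_mem : w ∈ T.lca x₂ s₂ := by
    refine hsub (hy.2 s₁ hyσ.symm ?_)
    rw [T.lca_comm]
    exact hw.mem_lca hwσ.symm
  have hx₂w : bestMatch T sigmaRed x₂ w := h₂.of_mem_lca (hwσ.trans hx₁s₂) hw_mem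
  rcases Set.mem_symmDiff.mp ((hT x₂ w).mpr hx₂w) with ⟨hE, -⟩ | ⟨hF, -⟩
  · exact notMem_Ered_of_mem_Xset_of_mem_Yset hij hx₂ hwY hE
  · exact hwF x₂ hF

lemma false_of_arc_of_arcs_from_Xset (hFq : F.ncard < q) {i j : Fin m} (hij : i ≠ j)
    {x₁ x₂ s₁ s₂ : Vred SS m r q} (hx₁ : x₁ ∈ Xset i) (hx₂ : x₂ ∈ Xset j)
    (h₁ : (x₁, s₁) ∈ symmDiff (Ered 𝒞) F) (h₂ : (x₂, s₂) ∈ symmDiff (Ered 𝒞) F)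
    (h₁₂ : (s₁, s₂) ∈ symmDiff (Ered 𝒞) F) : False := by
  have hx₁s₁ := (hT _ _).mp h₁
  have hx₂s₂ := (hT _ _).mp h₂
  have hs₁s₂ := (hT _ _).mp h₁₂
  have hx₁s₂ : sigmaRed x₁ = sigmaRed s₂ := by
    rw [Bool.eq_not_of_ne hx₁s₁.1, Bool.eq_not_of_ne hs₁s₂.1, Bool.not_not]
  have hx₂s₁ : sigmaRed x₂ = sigmaRed s₁ := by
    rw [Bool.eq_not_of_ne hx₂s₂.1, Bool.eq_not_of_ne hs₁s₂.1.symm, Bool.not_not]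
  have hs₂_mem : s₂ ∈ T.lca x₁ s₁ := by
    rw [T.lca_comm]
    exact hs₁s₂.mem_lca hx₁s₂
  rcases T.lca_subset_or_subset_of_mem hs₂_mem (T.mem_lca_right x₂ s₂) with h | h
  · exact false_of_lca_subset_lca hT hFq hij hx₁ hx₂ hx₁s₂ hs₁s₂.1 hx₁s₁ hx₂s₂ h
  · exact false_of_lca_subset_lca hT hFq hij.symm hx₂ hx₁ hx₂s₁ hs₁s₂.1.symm hx₂s₂ hx₁s₁ h

end Reduction

theorem stmt19_general {SS : Type*} [Fintype SS] (t m : ℕ)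
    (𝒞 : Fin m → Finset SS)
    (F : Set (Vred SS m (rr t) (qq t m) × Vred SS m (rr t) (qq t m)))
    (hF : F.ncard ≤ kk t m)
    (hbmg : IsBMG (fun u v => (u, v) ∈ symmDiff (Ered 𝒞) F) sigmaRed) :
    ∀ (s₁ s₂ : Vred SS m (rr t) (qq t m)), s₁ ∈ Sset → s₂ ∈ Sset →
      ∀ (i j : Fin m), i ≠ j →
        ∀ x₁ ∈ Xset i, ∀ x₂ ∈ Xset j,
          (x₁, s₁) ∈ symmDiff (Ered 𝒞) F → (x₂, s₂) ∈ symmDiff (Ered 𝒞) F →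
          (s₁, s₂) ∉ symmDiff (Ered 𝒞) F ∧ (s₂, s₁) ∉ symmDiff (Ered 𝒞) F := by
  intro s₁ s₂ _ _ i j hij x₁ hx₁ x₂ hx₂ h₁ h₂
  obtain ⟨T, hT⟩ := hbmg
  have ht : 1 ≤ t := by
    obtain ⟨p, -, -⟩ := hx₁
    refine Nat.pos_of_ne_zero fun h => ?_
    subst h
    exact absurd p.pos (by simp [rr])
  have hm : 2 ≤ m := by
    have := Fin.val_ne_of_ne hij
    omega
  have hFq : F.ncard < qq t m := hF.trans_lt (by have := one_le_kk ht hm; unfold qq; omega)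
  exact ⟨false_of_arc_of_arcs_from_Xset hT hFq hij hx₁ hx₂ h₁ h₂,
    false_of_arc_of_arcs_from_Xset hT hFq hij.symm hx₂ hx₁ h₂ h₁⟩

/-- Claim: deletions-in-S.
Let `F ⊆ V×V` be a loop-free arc set with `|F| ≤ k` such that `(G△F, σ)` is a BMG, and
let `s₁, s₂ ∈ S` be vertices such that `G△F` contains arcs `(x₁,s₁)` and `(x₂,s₂)` for
some `x₁ ∈ X_i` and `x₂ ∈ X_j` with `i ≠ j`. Then neither `(s₁,s₂)` nor `(s₂,s₁)` is an
arc of `G△F`. -/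
theorem stmt19 {SS : Type*} [Fintype SS] [DecidableEq SS] (t m : ℕ)
    (hcard : Fintype.card SS = 3 * t)
    (𝒞 : Fin m → Finset SS) (h𝒞 : ∀ i, (𝒞 i).card = 3)
    (F : Set (Vred SS m (rr t) (qq t m) × Vred SS m (rr t) (qq t m)))
    (hloop : ∀ v, (v, v) ∉ F) (hF : F.ncard ≤ kk t m)
    (hbmg : IsBMG (fun u v => (u, v) ∈ symmDiff (Ered 𝒞) F) sigmaRed) :
    ∀ (s₁ s₂ : Vred SS m (rr t) (qq t m)), s₁ ∈ Sset → s₂ ∈ Sset →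
      ∀ (i j : Fin m), i ≠ j →
        ∀ x₁ ∈ Xset i, ∀ x₂ ∈ Xset j,
          (x₁, s₁) ∈ symmDiff (Ered 𝒞) F → (x₂, s₂) ∈ symmDiff (Ered 𝒞) F →
          (s₁, s₂) ∉ symmDiff (Ered 𝒞) F ∧ (s₂, s₁) ∉ symmDiff (Ered 𝒞) F :=
  stmt19_general t m 𝒞 F hF hbmg
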